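/- Normal form lemma: every L-formula φ is provably equivalent in AX (hence in each extension AX_det, AX↓, AX↓_det) to a disjunction of conjunctive clauses, where each clause has the form π ∧ ⋀_{i∈I}([α_i] ⋁_{j∈J_i} β_{i,j}) ∧ ⋀_{k∈K} ⟨α_k⟩ β_k with π ∈ L_prop, all α's in L_int, all β_{i,j} and β_k in L_int, and with the α_i for distinct i ∈ I pairwise distinct. -/

import Mathlib

set_option maxHeartbeats 1000000

namespace CausalSim

/-! ### Propositional syntax -/

/-- Propositional formulas over atoms `X_i`. -/
inductive PropForm : Type
  | atom : ℕ → PropForm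
  | neg : PropForm → PropForm
  | and : PropForm → PropForm → PropForm
  | or : PropForm → PropForm → PropForm
  deriving DecidableEq

def PropForm.imp (φ ψ : PropForm) : PropForm := .or (.neg φ) ψ

/-- A fixed propositional contradiction. -/
def PropForm.bot : PropForm := .and (.atom 0) (.neg (.atom 0))

/-- Its negation, a fixed tautology. -/
def PropForm.top : PropForm := PropForm.neg PropForm.bot

def PropForm.eval (v : ℕ → Bool) : PropForm → Bool
  | .atom i => v i
  | .neg φ => !(φ.eval v)
  | .and φ ψ => φ.eval v && ψ.eval v
  | .or φ ψ => φ.eval v || ψ.eval v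

/-- `L_int`: ordered conjunctions of literals over distinct atoms, represented by
the list of literals `(index, polarity)`, with strictly increasing indices.
The empty list represents the empty intervention `⊤`. -/
abbrev Lint : Type := {l : List (ℕ × Bool) // l.Chain' fun p q => p.1 < q.1}

instance : DecidableEq Lint := fun a b =>
  decidable_of_iff (a.1 = b.1) Subtype.ext_iff.symm

def Lint.top : Lint := ⟨[], List.isChain_nil⟩

/-- The partial assignment (intervention) specified by `α ∈ L_int`. -/
def Lint.itv (α : Lint) : ℕ → Option Bool :=
  fun i => (α.1.find? fun p => p.1 == i).map Prod.snd

def PropForm.lit (p : ℕ × Bool) : PropForm :=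
  if p.2 then .atom p.1 else .neg (.atom p.1)

/-- `α ∈ L_int` regarded as a propositional formula (conjunction of its literals;
`⊤` for the empty intervention). -/
def Lint.toProp (α : Lint) : PropForm :=
  match α.1 with
  | [] => PropForm.top
  | p :: rest => rest.foldl (fun acc q => .and acc (.lit q)) (.lit p)

/-! ### The language `L` -/

/-- The causal simulation language `L`: propositional formulas over the atoms
`X ∪ L_cond`, where a conditional `[α]β` has antecedent `α ∈ L_int` and
consequent `β ∈ L_prop`. -/
inductive LForm : Type
  | atom : ℕ → LForm
  | cond : Lint → PropForm → LForm
  | neg : LForm → LForm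
  | and : LForm → LForm → LForm
  | or : LForm → LForm → LForm

def LForm.imp (φ ψ : LForm) : LForm := .or (.neg φ) ψ

def LForm.iff (φ ψ : LForm) : LForm := .and (φ.imp ψ) (ψ.imp φ)

/-- `⟨α⟩β`, an abbreviation for `¬[α]¬β`. -/
def LForm.dia (α : Lint) (β : PropForm) : LForm := .neg (.cond α (.neg β))

/-- The embedding of `L_prop` into `L`. -/
def PropForm.toL : PropForm → LForm
  | .atom i => .atom i
  | .neg φ => .neg φ.toL
  | .and φ ψ => .and φ.toL ψ.toL
  | .or φ ψ => .or φ.toL ψ.toL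

/-- Evaluation of an `L`-formula treating the elements of `X ∪ L_cond` as
propositional atoms: `v` assigns values to the `X`-atoms and `w` to the
conditional atoms. -/
def LForm.evalA (v : ℕ → Bool) (w : Lint → PropForm → Bool) : LForm → Bool
  | .atom i => v i
  | .cond α β => w α β
  | .neg φ => !(φ.evalA v w)
  | .and φ ψ => φ.evalA v w && ψ.evalA v w
  | .or φ ψ => φ.evalA v w || ψ.evalA v w

/-- Substitution instances of propositional tautologies over the atoms `X ∪ L_cond`. -/
def Tautology (φ : LForm) : Prop := ∀ v w, φ.evalA v w = true

/-! ### Turing machines over a Boolean variable tape, and interventions -/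

/-- A transition rule `((q, read), (q', write, moveRight))`. -/
abbrev Rule : Type := (ℕ × Bool) × (ℕ × Bool × Bool)

/-- A (possibly non-deterministic) Turing machine, given by its finite list of
transition rules; the initial control state is `0`, and the machine halts in a
configuration to which no rule applies. -/
abbrev Machine : Type := List Rule

/-- A configuration: control state, head position, and tape contents. -/
structure Cfg where
  q : ℕ
  pos : ℕ
  tape : ℕ → Bool

/-- The initial tape: the intervention `itv` first sets the intervened variables. -/
def initTape (itv : ℕ → Option Bool) (x : ℕ → Bool) : ℕ → Bool :=
  fun i => (itv i).getD (x i)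

/-- Writing under an intervention: writes to intervened variables are ignored. -/
def writeTape (itv : ℕ → Option Bool) (t : ℕ → Bool) (pos : ℕ) (b : Bool) : ℕ → Bool :=
  if itv pos = none then Function.update t pos b else t

def movePos (p : ℕ) (right : Bool) : ℕ := if right then p + 1 else p - 1

/-- One step of the intervened machine `I_itv(T)`. -/
def MStep (T : Machine) (itv : ℕ → Option Bool) (c c' : Cfg) : Prop :=
  ∃ r ∈ T, r.1 = (c.q, c.tape c.pos) ∧
    c' = ⟨r.2.1, movePos c.pos r.2.2.2, writeTape itv c.tape c.pos r.2.2.1⟩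

/-- A halted configuration: no rule applies. -/
def Halted (T : Machine) (c : Cfg) : Prop := ∀ r ∈ T, r.1 ≠ (c.q, c.tape c.pos)

/-- The set of result tapes of halting executions of `I_itv(T)` on input `x`. -/
def Outputs (T : Machine) (itv : ℕ → Option Bool) (x : ℕ → Bool) : Set (ℕ → Bool) :=
  {y | ∃ c : Cfg, Relation.ReflTransGen (MStep T itv) ⟨0, 0, initTape itv x⟩ c ∧
        Halted T c ∧ c.tape = y}

/-- Deterministic machines: at most one rule per (state, read symbol). -/
def Machine.Det (T : Machine) : Prop := ∀ r₁ ∈ T, ∀ r₂ ∈ T, r₁.1 = r₂.1 → r₁ = r₂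

/-- State descriptions have finite support. -/
def FinSupp (x : ℕ → Bool) : Prop := {i | x i = true}.Finite

/-- Machines with at least one halting execution on every input tape under
every intervention. -/
def Machine.TotalHalting (T : Machine) : Prop :=
  ∀ (α : Lint) (x : ℕ → Bool), FinSupp x → (Outputs T α.itv x).Nonempty

/-- Finite state machines: over all inputs and interventions, the machine reads and
writes only boundedly many tape variables. -/
def Machine.FiniteState (T : Machine) : Prop :=
  ∃ B : ℕ, ∀ (α : Lint) (x : ℕ → Bool), FinSupp x →
    ∀ c : Cfg, Relation.ReflTransGen (MStep T α.itv) ⟨0, 0, initTape α.itv x⟩ c → c.pos < B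

/-! ### Causal simulation models and satisfaction -/

/-- A causal simulation model: a machine together with a state description with
finite support. -/
structure CSM where
  T : Machine
  x : ℕ → Bool
  fin : FinSupp x

/-- Satisfaction, generically in the map sending each intervention `α ∈ L_int`
to the set of output tapes of the corresponding halting executions. -/
def SatGen (O : Lint → Set (ℕ → Bool)) (x : ℕ → Bool) : LForm → Prop
  | .atom i => x i = true
  | .cond α β => ∀ y ∈ O α, β.eval y = true
  | .neg φ => ¬ SatGen O x φ
  | .and φ ψ => SatGen O x φ ∧ SatGen O x ψ
  | .or φ ψ => SatGen O x φ ∨ SatGen O x ψ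

/-- `(T, x) ⊨ φ`. -/
def CSM.Sat (M : CSM) (φ : LForm) : Prop :=
  SatGen (fun α => Outputs M.T α.itv M.x) M.x φ

/-- The class `M` of all causal simulation models. -/
def inM (_ : CSM) : Prop := True

/-- The class `M_det`. -/
def inMdet (M : CSM) : Prop := M.T.Det

/-- The class `M↓`. -/
def inMhalt (M : CSM) : Prop := M.T.TotalHalting

/-- The class `M↓_det`. -/
def inMdethalt (M : CSM) : Prop := M.T.Det ∧ M.T.TotalHalting

/-! ### The axiomatic systems -/

/-- Derivability from: propositional tautologies (over atoms `X ∪ L_cond`),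
the axioms `R` and `K`, extra axioms `extra`, modus ponens, and the rule `RW`. -/
inductive Deriv (extra : LForm → Prop) : LForm → Prop
  | taut {φ} : Tautology φ → Deriv extra φ
  | extra {φ} : extra φ → Deriv extra φ
  | axR (α : Lint) : Deriv extra (.cond α α.toProp)
  | axK (α : Lint) (β γ : PropForm) :
      Deriv extra ((LForm.cond α (β.imp γ)).imp ((LForm.cond α β).imp (.cond α γ)))
  | mp {φ ψ} : Deriv extra (φ.imp ψ) → Deriv extra φ → Deriv extra ψ
  | rw (α : Lint) {β β' : PropForm} :
      Deriv extra (β.imp β').toL → Deriv extra ((LForm.cond α β).imp (.cond α β'))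

/-- Instances of axiom `F : ⟨α⟩β → [α]β`. -/
def axF (φ : LForm) : Prop :=
  ∃ (α : Lint) (β : PropForm), φ = (LForm.dia α β).imp (.cond α β)

/-- Instances of axiom `D : [α]β → ⟨α⟩β`. -/
def axD (φ : LForm) : Prop :=
  ∃ (α : Lint) (β : PropForm), φ = (LForm.cond α β).imp (LForm.dia α β)

def AX : LForm → Prop := Deriv fun _ => False
def AXdet : LForm → Prop := Deriv axF
def AXhalt : LForm → Prop := Deriv axD
def AXdethalt : LForm → Prop := Deriv fun φ => axF φ ∨ axD φ

end CausalSim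
namespace CausalSim

/-! ### Normal form clauses and selection functions -/

def bigAndL : List LForm → LForm
  | [] => PropForm.top.toL
  | φ :: rest => rest.foldl .and φ

def bigOrL : List LForm → LForm
  | [] => PropForm.bot.toL
  | φ :: rest => rest.foldl .or φ

def bigOrP : List PropForm → PropForm
  | [] => PropForm.bot
  | φ :: rest => rest.foldl .or φ

/-- The data of a conjunctive clause
`π ∧ ⋀_{i∈I}([α_i] ⋁_{j∈J_i} β_{i,j}) ∧ ⋀_{k∈K} ⟨α_k⟩ β_k`. -/
structure Clause where
  pi : PropForm
  boxes : List (Lint × List Lint)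
  dias : List (Lint × Lint)

/-- The `α_i` (for distinct `i ∈ I`) are pairwise distinct. -/
def Clause.wf (δ : Clause) : Prop := (δ.boxes.map Prod.fst).Pairwise (· ≠ ·)

def Clause.toLForm (δ : Clause) : LForm :=
  .and δ.pi.toL (.and
    (bigAndL (δ.boxes.map fun p => .cond p.1 (bigOrP (p.2.map Lint.toProp))))
    (bigAndL (δ.dias.map fun p => LForm.dia p.1 p.2.toProp)))

/-- `S_δ`: the antecedents occurring in the clause `δ`. -/
def Clause.ants (δ : Clause) : List Lint := δ.boxes.map Prod.fst ++ δ.dias.map Prod.fst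

/-- A list of literals is propositionally consistent. -/
def LitsConsistent (l : List (ℕ × Bool)) : Prop :=
  ∀ i, ¬((i, true) ∈ l ∧ (i, false) ∈ l)

/-- `γ` is the `L_int`-equivalent of the conjunction of the literals `l`
(reordering and deletion of repeated literals). -/
def Lint.IsEquivOf (γ : Lint) (l : List (ℕ × Bool)) : Prop := γ.1.toFinset = l.toFinset

/-- `f` is a selection function for the clause `δ`. -/
def IsSelection (δ : Clause) (f : Lint → List Lint) : Prop :=
  (∀ α ∈ δ.ants, α ∉ δ.dias.map Prod.fst → f α = []) ∧
  (∀ α ∈ δ.dias.map Prod.fst, ∃ sel : Lint × Lint → Lint,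
    f α = (δ.dias.filter fun p => decide (p.1 = α)).map sel ∧
    ∀ p ∈ δ.dias, p.1 = α →
      (∀ J, (α, J) ∈ δ.boxes →
        ∃ j ∈ J, LitsConsistent (α.1 ++ p.2.1 ++ j.1) ∧
          (sel p).IsEquivOf (α.1 ++ p.2.1 ++ j.1)) ∧
      (α ∉ δ.boxes.map Prod.fst →
        LitsConsistent (α.1 ++ p.2.1) ∧ (sel p).IsEquivOf (α.1 ++ p.2.1)))

/-! ### Sizes -/

def PropForm.size : PropForm → ℕ
  | .atom i => i + 1
  | .neg φ => φ.size + 1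
  | .and φ ψ => φ.size + ψ.size + 1
  | .or φ ψ => φ.size + ψ.size + 1

def Lint.size (α : Lint) : ℕ := (α.1.map fun p => p.1 + 1).sum + 1

/-- `|φ|`, the number of symbols of `φ` (an occurrence of the atom `X_i`
contributing `i + 1` symbols). -/
def LForm.size : LForm → ℕ
  | .atom i => i + 1
  | .cond α β => α.size + β.size + 1
  | .neg φ => φ.size + 1
  | .and φ ψ => φ.size + ψ.size + 1
  | .or φ ψ => φ.size + ψ.size + 1

def PropForm.maxAtom : PropForm → ℕ
  | .atom i => i
  | .neg φ => φ.maxAtom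
  | .and φ ψ => max φ.maxAtom ψ.maxAtom
  | .or φ ψ => max φ.maxAtom ψ.maxAtom

def Lint.maxAtom (α : Lint) : ℕ := (α.1.map Prod.fst).foldr max 0

/-- `N`: the largest index of an atom occurring in `φ`. -/
def LForm.maxAtom : LForm → ℕ
  | .atom i => i
  | .cond α β => max α.maxAtom β.maxAtom
  | .neg φ => φ.maxAtom
  | .and φ ψ => max φ.maxAtom ψ.maxAtom
  | .or φ ψ => max φ.maxAtom ψ.maxAtom

/-- `S_φ`: the antecedents of the conditionals occurring in `φ`. -/
def LForm.ants : LForm → List Lint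
  | .atom _ => []
  | .cond α _ => [α]
  | .neg φ => φ.ants
  | .and φ ψ => φ.ants ++ ψ.ants
  | .or φ ψ => φ.ants ++ ψ.ants

/-! ### The programming language `PL` -/

/-- Assignment statements `X_i := c`, `X_i := X_j`, `X_i := !X_j`. -/
inductive BAssign : Type
  | const (i : ℕ) (c : Bool)
  | copy (i j : ℕ)
  | negcopy (i j : ℕ)
  deriving DecidableEq

def BAssign.target : BAssign → ℕ
  | .const i _ => i
  | .copy i _ => i
  | .negcopy i _ => i

def BAssign.maxVar : BAssign → ℕ
  | .const i _ => i
  | .copy i j => max i j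
  | .negcopy i j => max i j

/-- Tests `X_i = c`, `X_i = X_j`, `X_i != X_j`, and conjunctions thereof. -/
inductive BTest : Type
  | eqc (i : ℕ) (c : Bool)
  | eqv (i j : ℕ)
  | nev (i j : ℕ)
  | and (t₁ t₂ : BTest)
  deriving DecidableEq

def BTest.eval (s : ℕ → Bool) : BTest → Bool
  | .eqc i c => s i == c
  | .eqv i j => s i == s j
  | .nev i j => !(s i == s j)
  | .and t₁ t₂ => t₁.eval s && t₂.eval s

def BTest.size : BTest → ℕ
  | .eqc _ _ => 1
  | .eqv _ _ => 1
  | .nev _ _ => 1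
  | .and t₁ t₂ => t₁.size + t₂.size + 1

/-- Programs of `PL`: the empty program, assignments, sequencing,
if-then-else, nondeterministic choice, and the unconditional infinite loop. -/
inductive Prog : Type
  | empty
  | assign (a : BAssign)
  | seq (p q : Prog)
  | ite (c : BTest) (p q : Prog)
  | choose (ps : List Prog)
  | loop

mutual
  /-- The length of a program. -/
  def Prog.size : Prog → ℕ
    | .empty => 1
    | .assign _ => 1
    | .seq p q => p.size + q.size + 1
    | .ite c p q => c.size + p.size + q.size + 1
    | .choose ps => Prog.sizeList ps + 1
    | .loop => 1
  def Prog.sizeList : List Prog → ℕ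
    | [] => 0
    | p :: ps => p.size + Prog.sizeList ps
end

/-- The effect of an assignment under an intervention: writes to intervened
variables are ignored. -/
def applyAssign (itv : ℕ → Option Bool) (a : BAssign) (s : ℕ → Bool) : ℕ → Bool :=
  let v : Bool := match a with
    | .const _ c => c
    | .copy _ j => s j
    | .negcopy _ j => !(s j)
  if itv a.target = none then Function.update s a.target v else s

/-- Big-step semantics of `PL` under an intervention. A `loop`-statement has no
halting execution, and a `choose`-statement executes one of its branches. -/
inductive BigStep (itv : ℕ → Option Bool) : Prog → (ℕ → Bool) → (ℕ → Bool) → Prop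
  | empty (s) : BigStep itv .empty s s
  | assign (a s) : BigStep itv (.assign a) s (applyAssign itv a s)
  | seq {p q s t u} : BigStep itv p s t → BigStep itv q t u → BigStep itv (.seq p q) s u
  | iteT {c p q s t} : c.eval s = true → BigStep itv p s t → BigStep itv (.ite c p q) s t
  | iteF {c p q s t} : c.eval s = false → BigStep itv q s t → BigStep itv (.ite c p q) s t
  | choose {ps p s t} : p ∈ ps → BigStep itv p s t → BigStep itv (.choose ps) s t

/-- The set of result tapes of halting executions of the intervened program. -/
def ProgOutputs (P : Prog) (itv : ℕ → Option Bool) (x : ℕ → Bool) : Set (ℕ → Bool) :=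
  {y | BigStep itv P (initTape itv x) y}

/-- Satisfaction `(T_P, x) ⊨ φ` for the machine compiled from the program `P`
(whose executions are those of `P`). -/
def ProgSat (P : Prog) (x : ℕ → Bool) (φ : LForm) : Prop :=
  SatGen (fun α => ProgOutputs P α.itv x) x φ

end CausalSim
namespace CausalSim

/-! ### The canonical program fragment `PL†_{φ,C}` -/

def seqList : List Prog → Prog
  | [] => .empty
  | p :: ps => .seq p (seqList ps)

/-- Listing 1: `IsIntervened(X_i)` (with offset parameter `N`): performs the
toggle check for `X_i`, records the result in `X_{i+N}`, uses `X_{i+2N}` as a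
temporary variable, and leaves `X_i` unchanged. -/
def isIntervened (N i : ℕ) : Prog :=
  seqList [
    .assign (.copy (i + N) i),
    .assign (.negcopy i i),
    .assign (.copy (i + 2 * N) i),
    .ite (.eqv (i + 2 * N) (i + N))
      (.assign (.const (i + N) true)) (.assign (.const (i + N) false)),
    .assign (.negcopy i i)]

/-- One copy of `IsIntervened(X_i)` for each `1 ≤ i ≤ N`. -/
def isIntervenedAll (N : ℕ) : Prog :=
  seqList ((List.range' 1 N).map (isIntervened N))

/-- Listing 2: `HoldsFromIntervention(α)`: the condition checking that exactly
the variables occurring in `α` are marked as intervened and carry the values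
specified by `α`'s literals. -/
def holdsFromItv (N : ℕ) (α : Lint) : BTest :=
  ((List.range' 1 N).map fun i =>
    match α.itv i with
    | some b => BTest.and (.eqc i b) (.eqc (i + N) true)
    | none => BTest.eqc (i + N) false).foldr .and (.eqv 0 0)

/-- A sequence of assignment statements. -/
def assignSeq (l : List BAssign) : Prog := seqList (l.map Prog.assign)

/-- An admissible assignment sequence: assignments only to (pairwise distinct)
variables `X_i` with `1 ≤ i ≤ N`, mentioning only variables of index `≤ N`. -/
def GoodAssigns (N : ℕ) (l : List BAssign) : Prop :=
  (l.map BAssign.target).Nodup ∧ ∀ a ∈ l, a.maxVar ≤ N ∧ 1 ≤ a.target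

/-- The admissible bodies of the `if`-statements of a fragment program:
(a) a `choose`-statement with at most `C·|φ|` branches, each an admissible
assignment sequence; (b) a single admissible assignment sequence; or
(c) a single `loop`-statement — with (a) excluded for the deterministic
dialects and (c) excluded for the halting dialects. -/
def IfBody (C N sz : ℕ) (allowChoose allowLoop : Bool) (p : Prog) : Prop :=
  (allowChoose = true ∧ ∃ branches : List (List BAssign),
      p = .choose (branches.map assignSeq) ∧ branches.length ≤ C * sz ∧
      ∀ l ∈ branches, GoodAssigns N l) ∨
  (∃ l : List BAssign, p = assignSeq l ∧ GoodAssigns N l) ∨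
  (allowLoop = true ∧ p = .loop)

/-- Membership in the fragment `PL†_{φ,C}`: one copy of `IsIntervened(X_i)` for
each `1 ≤ i ≤ N`, followed by at most one `if`-statement with condition
`HoldsFromIntervention(α)` for each antecedent `α` occurring in `φ`, with an
admissible body. -/
def InFrag (C : ℕ) (φ : LForm) (allowChoose allowLoop : Bool) (P : Prog) : Prop :=
  ∃ ifs : List (Lint × Prog),
    (ifs.map Prod.fst).Nodup ∧
    (∀ q ∈ ifs, q.1 ∈ φ.ants ∧ IfBody C φ.maxAtom φ.size allowChoose allowLoop q.2) ∧
    P = .seq (isIntervenedAll φ.maxAtom)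
      (seqList (ifs.map fun q => Prog.ite (holdsFromItv φ.maxAtom q.1) q.2 .empty))

/-! ### Encodings into binary strings -/

def encNat (n : ℕ) : List Bool := List.replicate n true ++ [false]

def encListGen (enc : α → List Bool) (l : List α) : List Bool :=
  encNat l.length ++ l.flatMap enc

def encLit (p : ℕ × Bool) : List Bool := encNat p.1 ++ [p.2]

def encLint (α : Lint) : List Bool := encListGen encLit α.1

def encProp : PropForm → List Bool
  | .atom i => encNat 0 ++ encNat i
  | .neg φ => encNat 1 ++ encProp φ
  | .and φ ψ => encNat 2 ++ encProp φ ++ encProp ψ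
  | .or φ ψ => encNat 3 ++ encProp φ ++ encProp ψ

/-- A standard encoding of `L`-formulas as binary strings. -/
def encLForm : LForm → List Bool
  | .atom i => encNat 0 ++ encNat i
  | .cond α β => encNat 1 ++ encLint α ++ encProp β
  | .neg φ => encNat 2 ++ encLForm φ
  | .and φ ψ => encNat 3 ++ encLForm φ ++ encLForm ψ
  | .or φ ψ => encNat 4 ++ encLForm φ ++ encLForm ψ

def encAssign : BAssign → List Bool
  | .const i c => encNat 0 ++ encNat i ++ [c]
  | .copy i j => encNat 1 ++ encNat i ++ encNat j
  | .negcopy i j => encNat 2 ++ encNat i ++ encNat j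

def encTest : BTest → List Bool
  | .eqc i c => encNat 0 ++ encNat i ++ [c]
  | .eqv i j => encNat 1 ++ encNat i ++ encNat j
  | .nev i j => encNat 2 ++ encNat i ++ encNat j
  | .and t₁ t₂ => encNat 3 ++ encTest t₁ ++ encTest t₂

mutual
  /-- A standard encoding of programs as binary strings. -/
  def encProg : Prog → List Bool
    | .empty => encNat 0
    | .assign a => encNat 1 ++ encAssign a
    | .seq p q => encNat 2 ++ encProg p ++ encProg q
    | .ite c p q => encNat 3 ++ encTest c ++ encProg p ++ encProg q
    | .choose ps => encNat 4 ++ encNat ps.length ++ encProgList ps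
    | .loop => encNat 5
  def encProgList : List Prog → List Bool
    | [] => []
    | p :: ps => encProg p ++ encProgList ps
end

/-! ### Polynomial time, NP, and NP-completeness -/

/-- The identity finite encoding of binary strings. -/
def listBoolFinEncoding : Computability.Encoding (List Bool) Bool where
  encode := id
  decode := fun l => some l
  decode_encode := fun _ => rfl

/-- `f` is computable in polynomial time (by a Turing machine). -/
def PolyTimeFun (f : List Bool → List Bool) : Prop :=
  Nonempty (Turing.TM2ComputableInPolyTime listBoolFinEncoding.encode listBoolFinEncoding.encode f)

/-- Polynomial-time many-one reducibility. -/
def PolyReducible (L₁ L₂ : List Bool → Prop) : Prop :=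
  ∃ f : List Bool → List Bool, PolyTimeFun f ∧ ∀ s, L₁ s ↔ L₂ (f s)

/-- A self-delimiting pairing of binary strings. -/
def encPairStr (a b : List Bool) : List Bool := encNat a.length ++ a ++ b

/-- The class NP, via polynomial-time verifiers of polynomial-length certificates. -/
def InNP (L : List Bool → Prop) : Prop :=
  ∃ (V : List Bool → Bool) (p : Polynomial ℕ),
    PolyTimeFun (fun s => [V s]) ∧
    ∀ s, L s ↔ ∃ w : List Bool, w.length ≤ p.eval s.length ∧ V (encPairStr s w) = true

/-- NP-completeness with respect to polynomial-time many-one reductions. -/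
def NPComplete (L : List Bool → Prop) : Prop :=
  InNP L ∧ ∀ L' : List Bool → Prop, InNP L' → PolyReducible L' L

/-- The language Sim-Sat for a class of models: encodings of `L`-formulas
satisfied by some model in the class. -/
def SimSatLang (cls : CSM → Prop) : List Bool → Prop :=
  fun s => ∃ φ : LForm, s = encLForm φ ∧ ∃ M : CSM, cls M ∧ M.Sat φ

/-! ### Miscellaneous helpers -/

/-- The state description with support the list `xs`. -/
def stateOf (xs : List ℕ) : ℕ → Bool := fun i => decide (i ∈ xs)

theorem finSupp_stateOf (xs : List ℕ) : FinSupp (stateOf xs) := by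
  apply Set.Finite.subset (List.finite_toSet xs)
  intro i hi
  simpa [stateOf] using hi

/-- The model given by a machine and (the support of) a state description. -/
def csmOf (T : Machine) (xs : List ℕ) : CSM := ⟨T, stateOf xs, finSupp_stateOf xs⟩

/-- The singleton intervention `X_n := 1`. -/
def lintSingle (n : ℕ) : Lint := ⟨[(n, true)], List.isChain_singleton _⟩

/-- The set `Ω` of the non-compactness proposition, for `f : ℕ → ℕ`. -/
def Omega (f : ℕ → ℕ) : Set LForm :=
  {ψ | ∃ n, ψ = LForm.neg (.atom n)} ∪
  {ψ | ∃ n, ψ = LForm.dia (lintSingle n) (.atom (f n))} ∪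
  {ψ | ∃ n m, m ≠ n ∧ m ≠ f n ∧ ψ = LForm.cond (lintSingle n) (.neg (.atom m))}

end CausalSim

namespace CausalSim

/-!
By `R`, `K` and `RW`, a box `[α]` respects propositional equivalence of consequents and commutes
with finite conjunctions. If `⋁_γ γ` is the disjunctive normal form of `¬β` over `L_int`, then
`[α]β` is therefore equivalent to `⋀_γ [α]¬γ`. After this replacement `φ` is a propositional
combination of the atoms `Xᵢ` and of conditionals `[α]¬γ`, and its disjunctive normal form over
these atoms is already of the required shape: a negative literal `¬[α]¬γ` is `⟨α⟩γ`, and the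
positive literals `[α]¬γ` with a common antecedent combine to `[α]⋀¬γ`, a box over the
disjunctive normal form of `⋀¬γ`. Only propositional reasoning and these derived rules are used,
so the equivalence is derivable in `AX` and in each of its extensions.
-/

section Evaluation

variable (v : ℕ → Bool) (w : Lint → PropForm → Bool)

@[simp] lemma PropForm.eval_bot : PropForm.bot.eval v = false := by
  simp [PropForm.bot, PropForm.eval]

@[simp] lemma PropForm.eval_top : PropForm.top.eval v = true := by
  simp [PropForm.top, PropForm.eval]

@[simp] lemma PropForm.eval_lit (p : ℕ × Bool) : (PropForm.lit p).eval v = (v p.1 == p.2) := by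
  obtain ⟨i, _ | _⟩ := p <;> simp [PropForm.lit, PropForm.eval]

lemma PropForm.eval_foldl_and (l : List (ℕ × Bool)) (a : PropForm) :
    (l.foldl (fun acc q => acc.and (.lit q)) a).eval v
      = (a.eval v && l.all fun p => v p.1 == p.2) := by
  induction l generalizing a <;> simp [PropForm.eval, Bool.and_assoc, *]

@[simp] lemma Lint.eval_toProp (α : Lint) :
    α.toProp.eval v = α.1.all fun p => v p.1 == p.2 := by
  obtain ⟨_ | ⟨p, l⟩, _⟩ := α <;> simp [Lint.toProp, PropForm.eval_foldl_and]

lemma PropForm.eval_foldl_or (l : List PropForm) (a : PropForm) :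
    (l.foldl .or a).eval v = (a.eval v || l.any (·.eval v)) := by
  induction l generalizing a <;> simp [PropForm.eval, Bool.or_assoc, *]

@[simp] lemma eval_bigOrP (l : List PropForm) : (bigOrP l).eval v = l.any (·.eval v) := by
  cases l <;> simp [bigOrP, PropForm.eval_foldl_or]

def bigAndP (l : List PropForm) : PropForm := l.foldr .and .top

@[simp] lemma eval_bigAndP (l : List PropForm) : (bigAndP l).eval v = l.all (·.eval v) := by
  induction l <;> simp_all [bigAndP, PropForm.eval]

@[simp] lemma PropForm.evalA_toL (β : PropForm) : β.toL.evalA v w = β.eval v := by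
  induction β <;> simp [PropForm.toL, LForm.evalA, PropForm.eval, *]

@[simp] lemma LForm.evalA_imp (φ ψ : LForm) :
    (φ.imp ψ).evalA v w = (!φ.evalA v w || ψ.evalA v w) := rfl

@[simp] lemma LForm.evalA_iff (φ ψ : LForm) :
    (φ.iff ψ).evalA v w = (φ.evalA v w == ψ.evalA v w) := by
  simp only [LForm.iff, LForm.evalA, LForm.evalA_imp]
  cases φ.evalA v w <;> cases ψ.evalA v w <;> rfl

lemma LForm.evalA_foldl_or (l : List LForm) (a : LForm) :
    (l.foldl .or a).evalA v w = (a.evalA v w || l.any (·.evalA v w)) := by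
  induction l generalizing a <;> simp [LForm.evalA, Bool.or_assoc, *]

lemma LForm.evalA_foldl_and (l : List LForm) (a : LForm) :
    (l.foldl .and a).evalA v w = (a.evalA v w && l.all (·.evalA v w)) := by
  induction l generalizing a <;> simp [LForm.evalA, Bool.and_assoc, *]

@[simp] lemma evalA_bigOrL (l : List LForm) : (bigOrL l).evalA v w = l.any (·.evalA v w) := by
  cases l <;> simp [bigOrL, LForm.evalA_foldl_or]

@[simp] lemma evalA_bigAndL (l : List LForm) : (bigAndL l).evalA v w = l.all (·.evalA v w) := by
  cases l <;> simp [bigAndL, LForm.evalA_foldl_and]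

end Evaluation

namespace Deriv

variable {E : LForm → Prop}

lemma of_evalA_imp {Γ : List LForm} {ψ : LForm} (hΓ : ∀ φ ∈ Γ, Deriv E φ)
    (h : ∀ v w, (∀ φ ∈ Γ, φ.evalA v w = true) → ψ.evalA v w = true) : Deriv E ψ := by
  induction Γ generalizing ψ with
  | nil => exact taut fun v w => h v w (by simp)
  | cons φ Γ ih =>
    refine mp (ih (ψ := φ.imp ψ) (fun χ hχ => hΓ χ (by simp [hχ])) fun v w hv => ?_)
      (hΓ φ (by simp))
    cases hφ : φ.evalA v w
    · simp [hφ]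
    · simp [h v w (List.forall_mem_cons.2 ⟨hφ, hv⟩)]

lemma iff_of_evalA_eq {φ ψ : LForm} (h : ∀ v w, φ.evalA v w = ψ.evalA v w) :
    Deriv E (φ.iff ψ) :=
  of_evalA_imp (Γ := []) (by simp) fun v w _ => by simp [h v w]

lemma iff_trans {φ ψ χ : LForm} (h₁ : Deriv E (φ.iff ψ)) (h₂ : Deriv E (ψ.iff χ)) :
    Deriv E (φ.iff χ) :=
  of_evalA_imp (Γ := [φ.iff ψ, ψ.iff χ]) (by simp [h₁, h₂]) fun v w h => by simp_all

lemma iff_neg {φ ψ : LForm} (h : Deriv E (φ.iff ψ)) : Deriv E (φ.neg.iff ψ.neg) :=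
  of_evalA_imp (Γ := [φ.iff ψ]) (by simpa using h) fun v w h => by simp_all [LForm.evalA]

lemma iff_and {φ ψ φ' ψ' : LForm} (h₁ : Deriv E (φ.iff φ')) (h₂ : Deriv E (ψ.iff ψ')) :
    Deriv E ((φ.and ψ).iff (φ'.and ψ')) :=
  of_evalA_imp (Γ := [φ.iff φ', ψ.iff ψ']) (by simp [h₁, h₂]) fun v w h => by
    simp_all [LForm.evalA]

lemma iff_or {φ ψ φ' ψ' : LForm} (h₁ : Deriv E (φ.iff φ')) (h₂ : Deriv E (ψ.iff ψ')) :
    Deriv E ((φ.or ψ).iff (φ'.or ψ')) :=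
  of_evalA_imp (Γ := [φ.iff φ', ψ.iff ψ']) (by simp [h₁, h₂]) fun v w h => by
    simp_all [LForm.evalA]

lemma iff_bigOrL_map {ι : Type*} {l : List ι} {f g : ι → LForm}
    (h : ∀ i ∈ l, Deriv E ((f i).iff (g i))) :
    Deriv E ((bigOrL (l.map f)).iff (bigOrL (l.map g))) := by
  refine of_evalA_imp (Γ := l.map fun i => (f i).iff (g i)) (by simpa using h) fun v w hl => ?_
  simp only [List.mem_map, forall_exists_index, and_imp, forall_apply_eq_imp_iff₂,
    LForm.evalA_iff, beq_iff_eq] at hl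
  simp only [LForm.evalA_iff, evalA_bigOrL, List.any_map, beq_iff_eq]
  rw [Bool.eq_iff_iff]
  simp only [List.any_eq_true, Function.comp_apply]
  constructor <;> rintro ⟨i, hi, h⟩ <;> exact ⟨i, hi, by simpa [hl i hi] using h⟩

lemma cond_imp_cond (α : Lint) {β β' : PropForm} (h : ∀ v, β.eval v = true → β'.eval v = true) :
    Deriv E ((LForm.cond α β).imp (.cond α β')) :=
  rw α <| taut fun v _ => by
    cases hβ : β.eval v <;> simp [PropForm.imp, PropForm.eval, hβ, h v]

lemma iff_cond (α : Lint) {β β' : PropForm} (h : ∀ v, β.eval v = β'.eval v) :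
    Deriv E ((LForm.cond α β).iff (.cond α β')) := by
  refine of_evalA_imp (Γ := [(LForm.cond α β).imp (.cond α β'), (LForm.cond α β').imp (.cond α β)])
    (by simp [cond_imp_cond, h]) fun v w h => ?_
  simp only [List.mem_cons, List.not_mem_nil, or_false, forall_eq_or_imp, forall_eq,
    LForm.evalA_imp, LForm.evalA_iff, LForm.evalA] at h ⊢
  revert h
  cases w α β <;> cases w α β' <;> simp

lemma cond_top (α : Lint) : Deriv E (.cond α .top) :=
  mp (cond_imp_cond α fun v _ => PropForm.eval_top v) (axR α)

lemma iff_cond_and (α : Lint) (β γ : PropForm) :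
    Deriv E ((LForm.cond α (β.and γ)).iff ((LForm.cond α β).and (.cond α γ))) := by
  refine of_evalA_imp (Γ := [(LForm.cond α (β.and γ)).imp (.cond α β),
      (LForm.cond α (β.and γ)).imp (.cond α γ),
      (LForm.cond α β).imp (.cond α (γ.imp (β.and γ))),
      (LForm.cond α (γ.imp (β.and γ))).imp ((LForm.cond α γ).imp (.cond α (β.and γ)))])
    ?_ fun v w h => ?_
  · simp only [List.mem_cons, List.not_mem_nil, or_false, forall_eq_or_imp, forall_eq]
    refine ⟨cond_imp_cond α fun v h => ?_, cond_imp_cond α fun v h => ?_,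
      cond_imp_cond α fun v h => ?_, axK α γ (β.and γ)⟩ <;>
      simp_all [PropForm.eval, PropForm.imp]
  · simp only [List.mem_cons, List.not_mem_nil, or_false, forall_eq_or_imp, forall_eq,
      LForm.evalA_imp, LForm.evalA_iff, LForm.evalA] at h ⊢
    revert h
    cases w α (β.and γ) <;> cases w α β <;> cases w α γ <;> cases w α (γ.imp (β.and γ)) <;>
      simp

lemma iff_cond_bigAndP (α : Lint) {ι : Type*} (l : List ι) (f : ι → PropForm) :
    Deriv E ((LForm.cond α (bigAndP (l.map f))).iff (bigAndL (l.map fun i => .cond α (f i)))) := by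
  induction l with
  | nil =>
    exact of_evalA_imp (Γ := [.cond α .top]) (by simp [cond_top]) fun v w h => by
      simpa [bigAndP, LForm.evalA] using h
  | cons i l ih =>
    refine of_evalA_imp (Γ := [_, _]) (List.forall_mem_cons.2
      ⟨iff_cond_and α (f i) (bigAndP (l.map f)), List.forall_mem_singleton.2 ih⟩) fun v w h => ?_
    simp only [List.mem_cons, List.not_mem_nil, or_false, forall_eq_or_imp, forall_eq,
      LForm.evalA_iff, beq_iff_eq] at h
    rw [LForm.evalA_iff, beq_iff_eq, evalA_bigAndL, List.map_cons, List.map_cons, List.all_cons,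
      ← evalA_bigAndL, ← h.2]
    exact h.1

end Deriv

lemma PropForm.eval_congr {β : PropForm} {v v' : ℕ → Bool} (h : ∀ i ≤ β.maxAtom, v i = v' i) :
    β.eval v = β.eval v' := by
  induction β <;> simp_all [PropForm.eval, PropForm.maxAtom]

def assignments : ℕ → List (ℕ → Bool)
  | 0 => [fun _ => false]
  | n + 1 => (assignments n).flatMap fun s =>
      [Function.update s n false, Function.update s n true]

lemma exists_mem_assignments (v : ℕ → Bool) (n : ℕ) : ∃ s ∈ assignments n, ∀ i < n, s i = v i := by
  induction n with
  | zero => exact ⟨_, List.mem_singleton_self _, by simp⟩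
  | succ n ih =>
    obtain ⟨s, hs, hsv⟩ := ih
    refine ⟨Function.update s n (v n), List.mem_flatMap.2 ⟨s, hs, by cases v n <;> simp⟩,
      fun i hi => ?_⟩
    rcases (Nat.lt_succ_iff_lt_or_eq.1 hi) with hi | rfl
    · simp [Function.update_of_ne hi.ne, hsv i hi]
    · simp

def Lint.ofAssignment (n : ℕ) (s : ℕ → Bool) : Lint :=
  ⟨(List.range n).map fun i => (i, s i),
    (List.isChain_map _).2 <| (List.isChain_range _ n).2 fun m _ => Nat.lt_succ_self m⟩

lemma Lint.eval_toProp_ofAssignment (n : ℕ) (s v : ℕ → Bool) :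
    (Lint.ofAssignment n s).toProp.eval v = true ↔ ∀ i < n, v i = s i := by
  simp [Lint.ofAssignment]

def PropForm.dnf (β : PropForm) : List Lint :=
  ((assignments (β.maxAtom + 1)).filter β.eval).map (Lint.ofAssignment (β.maxAtom + 1))

@[simp] lemma PropForm.any_dnf (β : PropForm) (v : ℕ → Bool) :
    β.dnf.any (fun γ => γ.toProp.eval v) = β.eval v := by
  rw [Bool.eq_iff_iff]
  simp only [PropForm.dnf, List.any_map, List.any_eq_true, List.mem_filter, Function.comp_apply,
    Lint.eval_toProp_ofAssignment]
  constructor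
  · rintro ⟨s, ⟨-, hs⟩, hvs⟩
    rwa [PropForm.eval_congr fun i hi => hvs i (Nat.lt_succ_of_le hi)]
  · intro hv
    obtain ⟨s, hs, hsv⟩ := exists_mem_assignments v (β.maxAtom + 1)
    refine ⟨s, ⟨hs, ?_⟩, fun i hi => (hsv i hi).symm⟩
    rwa [PropForm.eval_congr fun i hi => hsv i (Nat.lt_succ_of_le hi)]

abbrev NLit : Type := (ℕ ⊕ (Lint × Lint)) × Bool

def NLit.toL : NLit → LForm
  | (.inl i, b) => (PropForm.lit (i, b)).toL
  | (.inr (α, γ), true) => .cond α γ.toProp.neg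
  | (.inr (α, γ), false) => .dia α γ.toProp

@[simp] lemma NLit.toL_inl (i : ℕ) (b : Bool) : NLit.toL (.inl i, b) = (PropForm.lit (i, b)).toL :=
  rfl

@[simp] lemma NLit.toL_inr_true (α γ : Lint) :
    NLit.toL (.inr (α, γ), true) = .cond α γ.toProp.neg := rfl

@[simp] lemma NLit.toL_inr_false (α γ : Lint) :
    NLit.toL (.inr (α, γ), false) = .dia α γ.toProp := rfl

def LForm.splitConds : LForm → LForm
  | .atom i => .atom i
  | .cond α β => bigAndL (β.neg.dnf.map fun γ => .cond α γ.toProp.neg)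
  | .neg φ => .neg φ.splitConds
  | .and φ ψ => .and φ.splitConds ψ.splitConds
  | .or φ ψ => .or φ.splitConds ψ.splitConds

lemma Deriv.iff_splitConds {E : LForm → Prop} (φ : LForm) : Deriv E (φ.iff φ.splitConds) := by
  induction φ with
  | atom i => exact iff_of_evalA_eq fun _ _ => rfl
  | cond α β =>
    refine (iff_cond α fun v => ?_).iff_trans (iff_cond_bigAndP α β.neg.dnf fun γ => γ.toProp.neg)
    simp only [eval_bigAndP, List.all_map, Function.comp_def, PropForm.eval,
      ← List.not_any_eq_all_not, PropForm.any_dnf, Bool.not_not]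
  | neg φ ih => exact iff_neg ih
  | and φ ψ ih₁ ih₂ => exact iff_and ih₁ ih₂
  | or φ ψ ih₁ ih₂ => exact iff_or ih₁ ih₂

def LForm.litDNF : LForm → Bool → List (List NLit)
  | .atom i, b => [[(.inl i, b)]]
  | .cond α β, true => [β.neg.dnf.map fun γ => (.inr (α, γ), true)]
  | .cond α β, false => β.neg.dnf.map fun γ => [(.inr (α, γ), false)]
  | .neg φ, b => φ.litDNF (!b)
  | .and φ ψ, true => (φ.litDNF true ×ˢ ψ.litDNF true).map fun p => p.1 ++ p.2
  | .and φ ψ, false => φ.litDNF false ++ ψ.litDNF false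
  | .or φ ψ, true => φ.litDNF true ++ ψ.litDNF true
  | .or φ ψ, false => (φ.litDNF false ×ˢ ψ.litDNF false).map fun p => p.1 ++ p.2

lemma List.any_map_append_product {α : Type*} (p : α → Bool) (A B : List (List α)) :
    ((A ×ˢ B).map fun c => c.1 ++ c.2).any (·.all p) = (A.any (·.all p) && B.any (·.all p)) := by
  rw [Bool.eq_iff_iff]
  simp only [List.any_map, List.any_eq_true, List.mem_product, Function.comp_apply,
    List.all_append, Bool.and_eq_true, Prod.exists, Bool.and_eq_true]
  constructor
  · rintro ⟨a, b, ⟨ha, hb⟩, hpa, hpb⟩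
    exact ⟨⟨a, ha, hpa⟩, b, hb, hpb⟩
  · rintro ⟨⟨a, ha, hpa⟩, b, hb, hpb⟩
    exact ⟨a, b, ⟨ha, hb⟩, hpa, hpb⟩

lemma LForm.any_litDNF (φ : LForm) (b : Bool) (v : ℕ → Bool) (w : Lint → PropForm → Bool) :
    (φ.litDNF b).any (·.all (·.toL.evalA v w)) = (φ.splitConds.evalA v w == b) := by
  induction φ generalizing b with
  | atom i => cases b <;> simp [LForm.litDNF, LForm.splitConds, LForm.evalA]
  | cond α β =>
    cases b <;> simp [LForm.litDNF, LForm.splitConds, LForm.evalA, LForm.dia, Function.comp_def,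
      List.any_eq_not_all_not]
  | neg φ ih => cases b <;> simp [LForm.litDNF, LForm.splitConds, LForm.evalA, ih]
  | and φ ψ ih₁ ih₂ =>
    cases b <;> simp only [LForm.litDNF, LForm.splitConds, List.any_append,
      List.any_map_append_product, ih₁, ih₂, LForm.evalA] <;>
      cases φ.splitConds.evalA v w <;> cases ψ.splitConds.evalA v w <;> rfl
  | or φ ψ ih₁ ih₂ =>
    cases b <;> simp only [LForm.litDNF, LForm.splitConds, List.any_append,
      List.any_map_append_product, ih₁, ih₂, LForm.evalA] <;>
      cases φ.splitConds.evalA v w <;> cases ψ.splitConds.evalA v w <;> rfl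

def NLit.xLit : NLit → Option PropForm
  | (.inl i, b) => some (.lit (i, b))
  | _ => none

def NLit.boxLit : NLit → Option (Lint × Lint)
  | (.inr q, true) => some q
  | _ => none

def NLit.diaLit : NLit → Option (Lint × Lint)
  | (.inr q, false) => some q
  | _ => none

lemma NLit.all_evalA_toL (c : List NLit) (v : ℕ → Bool) (w : Lint → PropForm → Bool) :
    c.all (·.toL.evalA v w) =
      ((c.filterMap NLit.xLit).all (·.eval v) &&
        (c.filterMap NLit.boxLit).all (fun q => w q.1 q.2.toProp.neg) &&
        (c.filterMap NLit.diaLit).all (fun q => !w q.1 q.2.toProp.neg)) := by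
  induction c with
  | nil => rfl
  | cons l c ih =>
    rw [List.all_cons, ih]
    rcases l with ⟨i | ⟨α, γ⟩, _ | _⟩ <;>
      simp only [NLit.xLit, NLit.boxLit, NLit.diaLit, List.filterMap_cons, List.all_cons,
        NLit.toL_inl, NLit.toL_inr_true, NLit.toL_inr_false, PropForm.evalA_toL, LForm.dia,
        LForm.evalA]
    · simp only [Bool.and_assoc]
    · simp only [Bool.and_assoc]
    · cases w α γ.toProp.neg <;> simp
    · cases w α γ.toProp.neg <;> simp

lemma List.all_dedup_map_fst_all_filter {α β : Type*} [DecidableEq α] (l : List (α × β))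
    (p : α → β → Bool) :
    ((l.map Prod.fst).dedup.all fun a => ((l.filter (·.1 = a)).map Prod.snd).all (p a)) =
      l.all fun q => p q.1 q.2 := by
  rw [Bool.eq_iff_iff]
  simp only [List.all_eq_true, List.mem_dedup, List.mem_map, List.mem_filter, decide_eq_true_eq]
  constructor
  · exact fun h q hq => h q.1 ⟨q, hq, rfl⟩ q.2 ⟨q, ⟨hq, rfl⟩, rfl⟩
  · rintro h _ - _ ⟨q, ⟨hq, rfl⟩, rfl⟩
    exact h q hq

def boxAnts (c : List NLit) : List Lint := ((c.filterMap NLit.boxLit).map Prod.fst).dedup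

def boxedUnder (c : List NLit) (α : Lint) : List Lint :=
  ((c.filterMap NLit.boxLit).filter (·.1 = α)).map Prod.snd

def toClause (c : List NLit) : Clause where
  pi := bigAndP (c.filterMap NLit.xLit)
  boxes := (boxAnts c).map fun α => (α, (bigAndP ((boxedUnder c α).map fun γ => γ.toProp.neg)).dnf)
  dias := c.filterMap NLit.diaLit

lemma toClause_wf (c : List NLit) : (toClause c).wf := by
  simp only [Clause.wf, toClause, List.map_map, Function.comp_def, List.map_id']
  exact List.nodup_dedup _

lemma Deriv.iff_cond_dnf {E : LForm → Prop} (α : Lint) (β : PropForm) :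
    Deriv E ((LForm.cond α (bigOrP (β.dnf.map Lint.toProp))).iff (.cond α β)) :=
  iff_cond α fun v => by simp only [eval_bigOrP, List.any_map, Function.comp_def, PropForm.any_dnf]

lemma Deriv.iff_toClause {E : LForm → Prop} (c : List NLit) :
    Deriv E ((bigAndL (c.map NLit.toL)).iff (toClause c).toLForm) := by
  refine of_evalA_imp (Γ := (boxAnts c).map fun α =>
      (LForm.cond α (bigOrP ((bigAndP ((boxedUnder c α).map fun γ => γ.toProp.neg)).dnf.map
        Lint.toProp))).iff (bigAndL ((boxedUnder c α).map fun γ => .cond α γ.toProp.neg)))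
    ?_ fun v w h => ?_
  · simp only [List.mem_map, forall_exists_index, and_imp, forall_apply_eq_imp_iff₂]
    exact fun α _ => (iff_cond_dnf α _).iff_trans (iff_cond_bigAndP α _ _)
  · simp only [List.mem_map, forall_exists_index, and_imp, forall_apply_eq_imp_iff₂,
      LForm.evalA_iff, beq_iff_eq] at h
    have hboxes : ((toClause c).boxes.all fun p =>
        w p.1 (bigOrP (p.2.map Lint.toProp))) =
        (c.filterMap NLit.boxLit).all fun q => w q.1 q.2.toProp.neg := by
      rw [← List.all_dedup_map_fst_all_filter (c.filterMap NLit.boxLit)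
        fun (α γ : Lint) => w α γ.toProp.neg, Bool.eq_iff_iff]
      simp only [toClause, List.all_map, List.all_eq_true, Function.comp_apply]
      refine forall₂_congr fun α hα => ?_
      have := h α hα
      simp only [LForm.evalA, evalA_bigAndL, List.all_map, Function.comp_def] at this
      rw [this]
      simp only [boxedUnder, List.all_map, List.all_eq_true, Function.comp_apply]
    simp only [LForm.evalA_iff, evalA_bigAndL, List.all_map, Function.comp_def, Clause.toLForm,
      LForm.evalA, PropForm.evalA_toL]
    rw [hboxes, NLit.all_evalA_toL]
    simp [toClause, LForm.dia, LForm.evalA, Bool.and_assoc]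

lemma Deriv.iff_bigOrL_toClause {E : LForm → Prop} (φ : LForm) :
    Deriv E (φ.iff (bigOrL (((φ.litDNF true).map toClause).map Clause.toLForm))) := by
  have hdnf : Deriv E (φ.splitConds.iff
      (bigOrL ((φ.litDNF true).map fun c => bigAndL (c.map NLit.toL)))) :=
    iff_of_evalA_eq fun v w => by
      simpa [Function.comp_def] using (φ.any_litDNF true v w).symm
  rw [List.map_map]
  exact (iff_splitConds φ).iff_trans (hdnf.iff_trans (iff_bigOrL_map fun c _ => iff_toClause c))

/-- Normal form lemma: every `L`-formula is provably equivalent in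
`AX` (hence in each extension) to a disjunction of conjunctive clauses of the form
`π ∧ ⋀_{i∈I}([α_i] ⋁_{j∈J_i} β_{i,j}) ∧ ⋀_{k∈K} ⟨α_k⟩ β_k`, with `π ∈ L_prop`,
all `β`'s in `L_int`, and the `α_i` pairwise distinct. -/
theorem normal_form (φ : LForm) :
    ∃ δs : List Clause, (∀ δ ∈ δs, δ.wf) ∧
      AX (φ.iff (bigOrL (δs.map Clause.toLForm))) ∧
      AXdet (φ.iff (bigOrL (δs.map Clause.toLForm))) ∧
      AXhalt (φ.iff (bigOrL (δs.map Clause.toLForm))) ∧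
      AXdethalt (φ.iff (bigOrL (δs.map Clause.toLForm))) :=
  ⟨(φ.litDNF true).map toClause, by simpa using fun c _ => toClause_wf c,
    Deriv.iff_bigOrL_toClause φ, Deriv.iff_bigOrL_toClause φ, Deriv.iff_bigOrL_toClause φ,
    Deriv.iff_bigOrL_toClause φ⟩

end CausalSim
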